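/- Let Ω ⊆ ℝ^d be a bounded open set, L the normalized Lebesgue measure on Ω, p > 1, and f, g ∈ L^p(L; ℝ^m), at least one of which is Lipschitz. Set κ = min{Lip(f)^p, Lip(g)^p} (the minimum taken over those of f, g that are Lipschitz) and ε(λ) = 1/(1 + (λκ)^{1/(p−1)}). Then for every λ ∈ (0,∞), d_{TL^p_λ}((f,L),(g,L))^p ≥ ε(λ)^{p−1} ‖f−g‖_{L^p(L)}^p. -/

import Mathlib

open MeasureTheory Filter

noncomputable section

/-- `lpPow p x y = |x - y|_p^p = ∑ i, |x i - y i|^p`, the p-th power of the ℓ^p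
distance between `x` and `y` in Euclidean space. -/
def lpPow (p : ℝ) {n : ℕ} (x y : Fin n → ℝ) : ℝ := ∑ i, |x i - y i| ^ p

/-- `Couplings μ ν` is the set of (probability) measures on the product whose first
marginal is `μ` and second marginal is `ν`. -/
def Couplings {α β : Type*} [MeasurableSpace α] [MeasurableSpace β]
    (μ : Measure α) (ν : Measure β) : Set (Measure (α × β)) :=
  {π | π.fst = μ ∧ π.snd = ν}

/-- The p-th power of the `TL^p_λ` distance:
`inf_{π ∈ Π(μ,ν)} ∫ (1/λ)|x-y|_p^p + |f(x)-g(y)|_p^p dπ`. -/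
def TLpPow {d m : ℕ} (p lam : ℝ) (f g : (Fin d → ℝ) → (Fin m → ℝ))
    (μ ν : Measure (Fin d → ℝ)) : ℝ :=
  sInf {r : ℝ | ∃ π ∈ Couplings μ ν,
    r = ∫ z : (Fin d → ℝ) × (Fin d → ℝ),
      ((1 / lam) * lpPow p z.1 z.2 + lpPow p (f z.1) (g z.2)) ∂π}

/-- The `TL^p_λ` distance. -/
def TLpDist {d m : ℕ} (p lam : ℝ) (f g : (Fin d → ℝ) → (Fin m → ℝ))
    (μ ν : Measure (Fin d → ℝ)) : ℝ := TLpPow p lam f g μ ν ^ (1 / p)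

/-- The normalized Lebesgue measure on `Ω`. -/
def nLeb {d : ℕ} (Ω : Set (Fin d → ℝ)) : Measure (Fin d → ℝ) :=
  (volume Ω)⁻¹ • volume.restrict Ω

/-!
Fix a coupling `π` of `L` with itself and suppose `f` is Lipschitz. Convexity of `t ↦ t ^ p`
gives `ε ^ (p - 1) |u + v| ^ p ≤ s ^ (1 - p) |u| ^ p + |v| ^ p` with `ε = 1 / (1 + s)`; choosing
`s = (λκ) ^ (1 / (p - 1))` makes `s ^ (1 - p) = 1 / (λκ)`, so with `u = f y - f x`,
`v = f x - g y` the Lipschitz bound yields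
`ε ^ (p - 1) |f y - g y| ^ p ≤ |x - y| ^ p / λ + |f x - g y| ^ p` pointwise. Integrating against
`π`, whose second marginal is `L` (the first one, if `g` is the Lipschitz function), bounds the
cost of every coupling from below. The cost must be
shown `π`-integrable (a non-integrable cost would have Bochner integral `0`); this is where the
boundedness of `Ω` and the `L^p` hypotheses enter.
-/

section lpPow

variable {n : ℕ}

lemma lpPow_nonneg (p : ℝ) (x y : Fin n → ℝ) : 0 ≤ lpPow p x y :=
  Finset.sum_nonneg fun _ _ => Real.rpow_nonneg (abs_nonneg _) _

lemma lpPow_comm (p : ℝ) (x y : Fin n → ℝ) : lpPow p x y = lpPow p y x := by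
  simp only [lpPow, abs_sub_comm]

lemma measurable_lpPow {α : Type*} [MeasurableSpace α] (p : ℝ) {φ ψ : α → Fin n → ℝ}
    (hφ : Measurable φ) (hψ : Measurable ψ) : Measurable fun a => lpPow p (φ a) (ψ a) :=
  Finset.measurable_sum _ fun _ _ => by fun_prop

lemma eq_of_lpPow_nonpos {p : ℝ} (hp : 0 < p) {x y : Fin n → ℝ} (h : lpPow p x y ≤ 0) :
    x = y := by
  have hterm := (Finset.sum_eq_zero_iff_of_nonneg fun i _ => Real.rpow_nonneg (abs_nonneg _) p).1
    (h.antisymm (lpPow_nonneg p x y))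
  funext i
  simpa [Real.rpow_eq_zero (abs_nonneg _) hp.ne', sub_eq_zero] using hterm i (Finset.mem_univ i)

/-- Convexity of `t ↦ t ^ p` at `|u| / (s ε)` and `|v| / ε` with the weights `s ε` and
`ε = 1 / (1 + s)`. -/
lemma rpow_abs_add_le {p s : ℝ} (hp : 1 ≤ p) (hs : 0 < s) (u v : ℝ) :
    (1 / (1 + s)) ^ (p - 1) * |u + v| ^ p ≤ s ^ (1 - p) * |u| ^ p + |v| ^ p := by
  set ε := 1 / (1 + s) with hε_def
  have hε : 0 < ε := by positivity
  have hθ : 0 < s * ε := by positivity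
  have hweights : s * ε + ε = 1 := by rw [hε_def]; field_simp; ring
  have hconv := (convexOn_rpow hp).2 (Set.mem_Ici.2 (by positivity : 0 ≤ |u| / (s * ε)))
    (Set.mem_Ici.2 (by positivity : 0 ≤ |v| / ε)) hθ.le hε.le hweights
  simp only [smul_eq_mul, mul_div_cancel₀ _ hθ.ne', mul_div_cancel₀ _ hε.ne'] at hconv
  calc ε ^ (p - 1) * |u + v| ^ p ≤ ε ^ (p - 1) * (|u| + |v|) ^ p := by
        gcongr
        exact abs_add_le u v
    _ ≤ ε ^ (p - 1) * (s * ε * (|u| / (s * ε)) ^ p + ε * (|v| / ε) ^ p) := by gcongr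
    _ = s ^ (1 - p) * |u| ^ p + |v| ^ p := by
        rw [Real.div_rpow (abs_nonneg _) hθ.le, Real.div_rpow (abs_nonneg _) hε.le,
          Real.mul_rpow hs.le hε.le, Real.rpow_sub_one hε.ne', Real.rpow_sub hs, Real.rpow_one]
        field_simp

lemma lpPow_triangle {p s : ℝ} (hp : 1 ≤ p) (hs : 0 < s) (a b c : Fin n → ℝ) :
    (1 / (1 + s)) ^ (p - 1) * lpPow p a c ≤ s ^ (1 - p) * lpPow p a b + lpPow p b c := by
  simp only [lpPow, Finset.mul_sum, ← Finset.sum_add_distrib]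
  gcongr with i
  simpa using rpow_abs_add_le hp hs (a i - b i) (b i - c i)

lemma lpPow_le_two_rpow_mul {p : ℝ} (hp : 1 ≤ p) (x y : Fin n → ℝ) :
    lpPow p x y ≤ 2 ^ (p - 1) * (lpPow p x 0 + lpPow p y 0) := by
  have h := lpPow_triangle hp one_pos x 0 y
  rw [Real.one_rpow, one_mul, lpPow_comm p 0 y, one_add_one_eq_two, one_div,
    Real.inv_rpow zero_le_two] at h
  rwa [← inv_mul_le_iff₀ (by positivity)]

lemma lpPow_le_of_lpPow_le_mul {p κ lam t : ℝ} (hp : 1 < p) (hκ : 0 ≤ κ) (hlam : 0 < lam)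
    (ht : 0 ≤ t) {a b c : Fin n → ℝ} (hab : lpPow p a b ≤ κ * t) :
    (1 / (1 + (lam * κ) ^ (1 / (p - 1)))) ^ (p - 1) * lpPow p a c ≤
      1 / lam * t + lpPow p b c := by
  rcases hκ.eq_or_lt with rfl | hκ
  · rw [zero_mul] at hab
    rw [eq_of_lpPow_nonpos (by linarith) hab, mul_zero,
      Real.zero_rpow (one_div_pos.2 (by linarith)).ne', add_zero, div_one, Real.one_rpow, one_mul]
    exact le_add_of_nonneg_left (by positivity)
  · have hlk : 0 < lam * κ := by positivity
    have hs : ((lam * κ) ^ (1 / (p - 1))) ^ (1 - p) = (lam * κ)⁻¹ := by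
      rw [← Real.rpow_mul hlk.le, ← Real.rpow_neg_one]
      congr 1
      field_simp [(by linarith : p - 1 ≠ 0)]
      ring
    calc _ ≤ (lam * κ)⁻¹ * lpPow p a b + lpPow p b c :=
          hs ▸ lpPow_triangle hp.le (by positivity) a b c
      _ ≤ (lam * κ)⁻¹ * (κ * t) + lpPow p b c := by gcongr
      _ = 1 / lam * t + lpPow p b c := by field_simp

end lpPow

section Couplings

variable {α β : Type*} [MeasurableSpace α] [MeasurableSpace β]

lemma map_diag_mem_couplings (μ : Measure α) : μ.map (fun x => (x, x)) ∈ Couplings μ μ :=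
  ⟨(Measure.fst_map_prodMk (X := id) measurable_id).trans Measure.map_id,
    (Measure.snd_map_prodMk (Y := id) measurable_id).trans Measure.map_id⟩

lemma isFiniteMeasure_of_mem_couplings {μ : Measure α} {ν : Measure β} [IsFiniteMeasure μ]
    {π : Measure (α × β)} (hπ : π ∈ Couplings μ ν) : IsFiniteMeasure π :=
  ⟨by rw [← Measure.fst_univ, hπ.1]; exact measure_lt_top μ _⟩

lemma integrable_lpPow_of_mem_couplings {n : ℕ} {p : ℝ} (hp : 1 ≤ p) {μ : Measure α}
    {ν : Measure β} {π : Measure (α × β)} (hπ : π ∈ Couplings μ ν) {φ : α → Fin n → ℝ}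
    {ψ : β → Fin n → ℝ} (hφ : Measurable φ) (hψ : Measurable ψ)
    (hφp : Integrable (fun x => lpPow p (φ x) 0) μ)
    (hψp : Integrable (fun y => lpPow p (ψ y) 0) ν) :
    Integrable (fun z => lpPow p (φ z.1) (ψ z.2)) π := by
  have hφπ : Integrable (fun z => lpPow p (φ z.1) 0) π :=
    Integrable.comp_measurable (g := fun x => lpPow p (φ x) 0)
      (hπ.1 ▸ hφp : Integrable _ π.fst) measurable_fst
  have hψπ : Integrable (fun z => lpPow p (ψ z.2) 0) π :=
    Integrable.comp_measurable (g := fun y => lpPow p (ψ y) 0)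
      (hπ.2 ▸ hψp : Integrable _ π.snd) measurable_snd
  refine ((hφπ.add hψπ).const_mul (2 ^ (p - 1))).mono'
    (measurable_lpPow p (hφ.comp measurable_fst) (hψ.comp measurable_snd)).aestronglyMeasurable
    (Eventually.of_forall fun z => ?_)
  rw [Real.norm_of_nonneg (lpPow_nonneg _ _ _)]
  exact lpPow_le_two_rpow_mul hp _ _

lemma integral_le_integral_of_map_eq {γ : Type*} [MeasurableSpace γ] {π : Measure α}
    {ρ : Measure γ} {c : α → γ} (hc : Measurable c) (hπc : π.map c = ρ) {F : γ → ℝ}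
    (hF : Measurable F) (hF0 : ∀ y, 0 ≤ F y) {G : α → ℝ} (hG : Integrable G π)
    (hFG : ∀ z, F (c z) ≤ G z) : ∫ y, F y ∂ρ ≤ ∫ z, G z ∂π := by
  rw [← hπc, integral_map hc.aemeasurable hF.aestronglyMeasurable]
  exact integral_mono_of_nonneg (Eventually.of_forall fun z => hF0 (c z)) hG
    (Eventually.of_forall hFG)

end Couplings

lemma le_TLpPow {d m : ℕ} {p lam r : ℝ} {f g : (Fin d → ℝ) → (Fin m → ℝ)}
    {μ ν : Measure (Fin d → ℝ)} (hne : (Couplings μ ν).Nonempty)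
    (h : ∀ π ∈ Couplings μ ν,
      r ≤ ∫ z, ((1 / lam) * lpPow p z.1 z.2 + lpPow p (f z.1) (g z.2)) ∂π) :
    r ≤ TLpPow p lam f g μ ν := by
  obtain ⟨π₀, hπ₀⟩ := hne
  exact le_csInf ⟨_, π₀, hπ₀, rfl⟩ (by rintro _ ⟨π, hπ, rfl⟩; exact h π hπ)

section nLeb

variable {d : ℕ}

instance (Ω : Set (Fin d → ℝ)) : IsFiniteMeasure (nLeb Ω) :=
  ⟨by
    rw [nLeb, Measure.smul_apply, Measure.restrict_apply_univ, smul_eq_mul]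
    exact (ENNReal.inv_mul_le_one _).trans_lt ENNReal.one_lt_top⟩

lemma integrable_lpPow_zero_nLeb {Ω : Set (Fin d → ℝ)} (hΩ : Bornology.IsBounded Ω) {p : ℝ}
    (hp : 0 ≤ p) : Integrable (fun x => lpPow p x 0) (nLeb Ω) := by
  obtain ⟨R, hR⟩ := hΩ.subset_closedBall 0
  have hball : ∀ᵐ x ∂nLeb Ω, x ∈ Metric.closedBall 0 R :=
    Measure.ae_smul_measure (ae_restrict_of_ae_restrict_of_subset hR
      (ae_restrict_mem measurableSet_closedBall)) _
  refine .of_bound (measurable_lpPow p measurable_id measurable_const).aestronglyMeasurable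
    (d * R ^ p) (hball.mono fun x hx => ?_)
  rw [Real.norm_of_nonneg (lpPow_nonneg _ _ _)]
  rw [mem_closedBall_zero_iff] at hx
  calc lpPow p x 0 ≤ ∑ _i : Fin d, R ^ p := Finset.sum_le_sum fun i _ => by
        gcongr
        simpa using (norm_le_pi_norm x i).trans hx
    _ = d * R ^ p := by simp

end nLeb

theorem tlp_lower_bound_Lp_of_lipschitz_general
    {d m : ℕ} (p : ℝ) (hp : 1 < p)
    (Ω : Set (Fin d → ℝ)) (hΩb : Bornology.IsBounded Ω)
    (f g : (Fin d → ℝ) → (Fin m → ℝ))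
    (hf : Measurable f) (hg : Measurable g)
    (hfp : Integrable (fun x => lpPow p (f x) 0) (nLeb Ω))
    (hgp : Integrable (fun x => lpPow p (g x) 0) (nLeb Ω))
    (κ : ℝ) (hκ : 0 ≤ κ)
    (hLip : (∀ x y, lpPow p (f x) (f y) ≤ κ * lpPow p x y) ∨
            (∀ x y, lpPow p (g x) (g y) ≤ κ * lpPow p x y))
    (lam : ℝ) (hlam : 0 < lam) :
    (1 / (1 + (lam * κ) ^ (1 / (p - 1)))) ^ (p - 1) *
        ∫ x, lpPow p (f x) (g x) ∂(nLeb Ω) ≤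
      TLpPow p lam f g (nLeb Ω) (nLeb Ω) := by
  refine le_TLpPow ⟨_, map_diag_mem_couplings _⟩ fun π hπ => ?_
  have := isFiniteMeasure_of_mem_couplings hπ
  have hlpΩ := integrable_lpPow_zero_nLeb hΩb (p := p) (by linarith)
  have hcost := ((integrable_lpPow_of_mem_couplings hp.le hπ measurable_id measurable_id hlpΩ
    hlpΩ).const_mul (1 / lam)).add (integrable_lpPow_of_mem_couplings hp.le hπ hf hg hfp hgp)
  set ε := (1 / (1 + (lam * κ) ^ (1 / (p - 1)))) ^ (p - 1)
  have hF0 (x : Fin d → ℝ) : 0 ≤ ε * lpPow p (f x) (g x) :=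
    mul_nonneg (by positivity) (lpPow_nonneg p (f x) (g x))
  have hF := (measurable_lpPow p hf hg).const_mul ε
  rw [← integral_const_mul]
  rcases hLip with hLf | hLg
  · refine integral_le_integral_of_map_eq measurable_snd hπ.2 hF hF0 hcost fun z => ?_
    refine lpPow_le_of_lpPow_le_mul hp hκ hlam (lpPow_nonneg _ _ _) ?_
    exact lpPow_comm p (f z.2) (f z.1) ▸ hLf z.1 z.2
  · refine integral_le_integral_of_map_eq measurable_fst hπ.1 hF hF0 hcost fun z => ?_
    rw [lpPow_comm p (f z.1) (g z.1), lpPow_comm p (f z.1) (g z.2)]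
    exact lpPow_le_of_lpPow_le_mul hp hκ hlam (lpPow_nonneg _ _ _) (hLg z.1 z.2)

/-- For `p > 1`, if at least one of `f`, `g` is Lipschitz (with respect to the ℓ^p norms)
and `κ` bounds the p-th power of its Lipschitz constant, then with
`ε(λ) = 1/(1 + (λκ)^{1/(p−1)})` one has
`d_{TL^p_λ}((f,L),(g,L))^p ≥ ε(λ)^{p−1} ‖f−g‖_{L^p(L)}^p` for every `λ > 0`. -/
theorem tlp_lower_bound_Lp_of_lipschitz
    {d m : ℕ} (p : ℝ) (hp : 1 < p)
    (Ω : Set (Fin d → ℝ)) (hΩo : IsOpen Ω) (hΩb : Bornology.IsBounded Ω)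
    (hΩne : Ω.Nonempty)
    (f g : (Fin d → ℝ) → (Fin m → ℝ))
    (hf : Measurable f) (hg : Measurable g)
    (hfp : Integrable (fun x => lpPow p (f x) 0) (nLeb Ω))
    (hgp : Integrable (fun x => lpPow p (g x) 0) (nLeb Ω))
    (κ : ℝ) (hκ : 0 ≤ κ)
    (hLip : (∀ x y, lpPow p (f x) (f y) ≤ κ * lpPow p x y) ∨
            (∀ x y, lpPow p (g x) (g y) ≤ κ * lpPow p x y))
    (lam : ℝ) (hlam : 0 < lam) :
    (1 / (1 + (lam * κ) ^ (1 / (p - 1)))) ^ (p - 1) *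
        ∫ x, lpPow p (f x) (g x) ∂(nLeb Ω) ≤
      TLpPow p lam f g (nLeb Ω) (nLeb Ω) :=
  tlp_lower_bound_Lp_of_lipschitz_general p hp Ω hΩb f g hf hg hfp hgp κ hκ hLip lam hlam
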